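/- arXiv:2308.00386 — 3 statements merged into one kernel-verified Lean document; each statement's English description precedes it below -/
import Mathlib

section
/- Let κ be an infinite cardinal, let α be an order automorphism of σℕ^κ and let k ≥ 2 be such that α({𝟏, 2_z, ..., k_z : z ∈ κ}) = {𝟏, 2_z, ..., k_z : z ∈ κ} setwise, with α(n_x) of the form n_y for all n ≤ k. Then for each x ∈ κ there is z ∈ κ with α((k+1)_x) = (k+1)_z. -/
open scoped Classical

/-- `σℕ^κ`: functions `κ → ℕ` with all values `≥ 1` and only finitely many values `≠ 1`. -/
def sigmaN (κ : Type*) : Set (κ → ℕ) :=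
  {a | (∀ x, 1 ≤ a x) ∧ {x | a x ≠ 1}.Finite}

/-- The poset `σℕ^κ` (with the pointwise order, inherited from `κ → ℕ`). -/
abbrev SN (κ : Type*) := ↥(sigmaN κ)

/-- The constant function `𝟏`. -/
def oneSN (κ : Type*) : SN κ :=
  ⟨fun _ => 1, fun _ => le_refl 1, by simp⟩

/-- `n_x`: value `n` at `x` and `1` elsewhere (for `n ≥ 1`; `max n 1` guards degenerate `n = 0`). -/
noncomputable def nfS {κ : Type*} (n : ℕ) (x : κ) : SN κ :=
  ⟨fun t => if t = x then max n 1 else 1, by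
    refine ⟨fun t => ?_, Set.Finite.subset (Set.finite_singleton x) fun t ht => ?_⟩
    · by_cases h : t = x <;> simp [h]
    · simp only [Set.mem_setOf_eq] at ht
      by_contra hc
      simp only [Set.mem_singleton_iff] at hc
      exact ht (if_neg hc)⟩

section aux
variable {κ : Type*}

lemma SN.le_iff (a b : SN κ) : a ≤ b ↔ ∀ t, a.1 t ≤ b.1 t := Iff.rfl

lemma SN.le_apply {a b : SN κ} (h : a ≤ b) (t : κ) : a.1 t ≤ b.1 t := h t

lemma SN.ext' {a b : SN κ} (h : ∀ t, a.1 t = b.1 t) : a = b :=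
  Subtype.ext (funext h)

lemma nfS_apply (n : ℕ) (x t : κ) :
    (nfS n x).1 t = if t = x then max n 1 else 1 := rfl

lemma nfS_le_iff {n : ℕ} (hn : 1 ≤ n) {x : κ} {b : SN κ} :
    nfS n x ≤ b ↔ n ≤ b.1 x := by
  constructor
  · intro h
    have := SN.le_apply h x
    simpa [nfS_apply, max_eq_left hn] using this
  · rw [SN.le_iff]; intro h t
    rcases eq_or_ne t x with rfl | ht
    · simpa [nfS_apply, max_eq_left hn] using h
    · simpa [nfS_apply, ht] using b.2.1 t

lemma nfS_eq_iff {n : ℕ} (hn : 1 ≤ n) {x : κ} {b : SN κ}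
    (hoff : ∀ t, t ≠ x → b.1 t = 1) (hx : b.1 x = n) :
    b = nfS n x := by
  refine SN.ext' fun t => ?_
  rcases eq_or_ne t x with rfl | ht
  · simp [nfS_apply, max_eq_left hn, hx]
  · simp [nfS_apply, ht, hoff t ht]

/-- nothing strictly between `k_x` and `(k+1)_x` -/
lemma between {k : ℕ} (hk : 1 ≤ k) (x : κ) (c : SN κ)
    (h1 : nfS k x ≤ c) (h2 : c ≤ nfS (k + 1) x) :
    c = nfS k x ∨ c = nfS (k + 1) x := by
  have hoff : ∀ t, t ≠ x → c.1 t = 1 := by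
    intro t ht
    have h2t := SN.le_apply h2 t
    simp only [nfS_apply, if_neg ht] at h2t
    exact le_antisymm h2t (c.2.1 t)
  have h1x := SN.le_apply h1 x
  have h2x := SN.le_apply h2 x
  rw [nfS_apply, if_pos rfl, max_eq_left hk] at h1x
  rw [nfS_apply, if_pos rfl, max_eq_left (by omega : (1:ℕ) ≤ k + 1)] at h2x
  rcases eq_or_lt_of_le h2x with heq | hlt
  · exact Or.inr (nfS_eq_iff (by omega) hoff heq)
  · refine Or.inl (nfS_eq_iff hk hoff ?_)
    omega

end aux

/-- Induction step: if `α` sends each `n_x` (for `2 ≤ n ≤ k`) to some `n_y`,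
then `α` sends each `(k+1)_x` to some `(k+1)_z`. -/
theorem stmt12 {κ : Type*} [Infinite κ] (α : SN κ ≃o SN κ) (k : ℕ) (hk : 2 ≤ k)
    (hone : α (oneSN κ) = oneSN κ)
    (hind : ∀ n : ℕ, 2 ≤ n → n ≤ k → ∀ x : κ, ∃ y : κ, α (nfS n x) = nfS n y) :
    ∀ x : κ, ∃ z : κ, α (nfS (k + 1) x) = nfS (k + 1) z := by
  intro x
  obtain ⟨z, hz⟩ := hind k hk le_rfl x
  obtain ⟨y, hy⟩ := hind 2 le_rfl hk x
  -- y = z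
  have hyz : y = z := by
    have h2k : nfS 2 x ≤ nfS k x := by
      rw [nfS_le_iff one_le_two, nfS_apply, if_pos rfl]
      omega
    have : nfS 2 y ≤ nfS k z := by
      rw [← hy, ← hz]; exact α.monotone h2k
    have h := (nfS_le_iff one_le_two).mp this
    by_contra hne
    rw [nfS_apply, if_neg hne] at h
    omega
  subst hyz
  set b := α (nfS (k + 1) x) with hb
  -- lower bound: k_y ≤ b
  have hkle : nfS k y ≤ b := by
    rw [← hz, hb]
    refine α.monotone ?_
    rw [nfS_le_iff (by omega : 1 ≤ k), nfS_apply, if_pos rfl]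
    omega
  have hkley := (nfS_le_iff (by omega : 1 ≤ k)).mp hkle
  -- off-coordinates of b are 1
  have hoff : ∀ t, t ≠ y → b.1 t = 1 := by
    intro w hw
    by_contra hne
    have hw2 : 2 ≤ b.1 w := by
      have := b.2.1 w; omega
    have h2wb : nfS 2 w ≤ b := (nfS_le_iff one_le_two).mpr hw2
    set a := α.symm (nfS 2 w) with ha
    have hale : a ≤ nfS (k + 1) x := by
      have := α.symm.monotone h2wb
      rwa [hb, α.symm_apply_apply] at this
    have hane : a ≠ oneSN κ := by
      intro h
      have : α a = nfS 2 w := by rw [ha, α.apply_symm_apply]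
      rw [h, hone] at this
      have := congrArg (fun f : SN κ => f.1 w) this
      simp [oneSN, nfS_apply] at this
    -- some coordinate of a is ≥ 2, and it must be x
    have hax : 2 ≤ a.1 x := by
      by_contra hax
      apply hane
      refine SN.ext' fun t => ?_
      have h1 := a.2.1 t
      have h2 := SN.le_apply hale t
      rcases eq_or_ne t x with rfl | ht
      · show a.1 t = 1; omega
      · simp only [nfS_apply, if_neg ht] at h2
        show a.1 t = 1
        omega
    have h2xa : nfS 2 x ≤ a := (nfS_le_iff one_le_two).mpr hax
    have : nfS 2 y ≤ nfS 2 w := by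
      rw [← hy]
      have := α.monotone h2xa
      rwa [ha, α.apply_symm_apply] at this
    have h := (nfS_le_iff one_le_two).mp this
    rw [nfS_apply] at h
    by_cases hyw : y = w
    · exact hw (hyw ▸ rfl) |>.elim
    · rw [if_neg hyw] at h; omega
  -- b ≠ k_y
  have hbne : b ≠ nfS k y := by
    intro h
    rw [← hz] at h
    have := α.injective (hb ▸ h)
    have := congrArg (fun f : SN κ => f.1 x) this
    simp only [nfS_apply, eq_self_iff_true, if_true, if_pos rfl, max_eq_left (by omega : (1:ℕ) ≤ k),
      max_eq_left (by omega : (1:ℕ) ≤ k + 1)] at this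
    omega
  have hby : k + 1 ≤ b.1 y := by
    rcases eq_or_lt_of_le hkley with heq | hlt
    · exact absurd (nfS_eq_iff (by omega) hoff heq.symm) hbne
    · omega
  -- rule out b y ≥ k + 2
  have hby' : b.1 y = k + 1 := by
    by_contra hne
    have hgt : k + 2 ≤ b.1 y := by omega
    set c := α.symm (nfS (k + 1) y) with hc
    have hc1 : nfS k x ≤ c := by
      have h1 : nfS k y ≤ nfS (k + 1) y := by
        rw [nfS_le_iff (by omega : 1 ≤ k), nfS_apply, if_pos rfl]
        omega
      have := α.symm.monotone h1
      rwa [← hz, α.symm_apply_apply] at this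
    have hc2 : c ≤ nfS (k + 1) x := by
      have h1 : nfS (k + 1) y ≤ b := (nfS_le_iff (by omega)).mpr (by omega)
      have := α.symm.monotone h1
      rwa [hb, α.symm_apply_apply] at this
    rcases between (by omega : 1 ≤ k) x c hc1 hc2 with h | h
    · have : nfS (k + 1) y = nfS k y := by
        rw [← hz]
        rw [hc] at h
        have := congrArg α h
        rwa [α.apply_symm_apply] at this
      have := congrArg (fun f : SN κ => f.1 y) this
      simp only [nfS_apply, eq_self_iff_true, if_true, if_pos rfl, max_eq_left (by omega : (1:ℕ) ≤ k),
      max_eq_left (by omega : (1:ℕ) ≤ k + 1)] at this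
      omega
    · have : nfS (k + 1) y = b := by
        rw [hc] at h
        have := congrArg α h
        rwa [α.apply_symm_apply, ← hb] at this
      have := congrArg (fun f : SN κ => f.1 y) this
      simp only [nfS_apply, eq_self_iff_true, if_true, if_pos rfl, max_eq_left (by omega : (1:ℕ) ≤ k),
      max_eq_left (by omega : (1:ℕ) ≤ k + 1)] at this
      omega
  exact ⟨y, nfS_eq_iff (by omega) hoff hby'⟩
end

section
/- For any infinite cardinal κ, every element α ∈ IPF(σℕ^κ) has a unique representation α = ρ_α ∘ F°_g ∘ λ_α for some bijection g of κ, where ρ_α : ↑d_α → σℕ^κ is z ↦ z - d_α + 𝟏, λ_α : σℕ^κ → ↑r_α is z ↦ z + r_α - 𝟏, and F°_g is the order automorphism a ↦ a ∘ g⁻¹ of σℕ^κ. -/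
open scoped Classical

/-- A partial map `α` on `σℕ^κ` belongs to `IPF(σℕ^κ)` iff it is an order isomorphism
from a principal filter `↑a` onto a principal filter `↑b`. Multiplication in
`IPF(σℕ^κ)` is left-to-right composition of partial maps: `α` followed by `β`
is `β.comp α` (`PFun` composition). -/
def IsIPF {κ : Type*} (α : SN κ →. SN κ) : Prop :=
  ∃ a b : SN κ, α.Dom = {z | a ≤ z} ∧ α.ran = {z | b ≤ z} ∧
    ∀ (z w : SN κ) (hz : z ∈ α.Dom) (hw : w ∈ α.Dom),
      z ≤ w ↔ α.fn z hz ≤ α.fn w hw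

/-- `z - a + 𝟏` (pointwise) as an element of `σℕ^κ`. -/
noncomputable def subAddOne {κ : Type*} (z a : SN κ) : SN κ :=
  ⟨fun x => z.1 x - a.1 x + 1, by
    refine ⟨fun x => Nat.le_add_left 1 _,
      Set.Finite.subset (z.2.2.union a.2.2) fun x hx => ?_⟩
    simp only [Set.mem_setOf_eq] at hx
    by_contra h
    simp only [Set.mem_union, Set.mem_setOf_eq, not_or, not_not] at h
    exact hx (by simp [h.1, h.2])⟩

/-- `z + b - 𝟏` (pointwise) as an element of `σℕ^κ`. -/
noncomputable def addSubOne {κ : Type*} (z b : SN κ) : SN κ :=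
  ⟨fun x => z.1 x + b.1 x - 1, by
    refine ⟨fun x => ?_, Set.Finite.subset (z.2.2.union b.2.2) fun x hx => ?_⟩
    · have h1 := z.2.1 x
      have h2 := b.2.1 x
      dsimp only
      omega
    · simp only [Set.mem_setOf_eq] at hx
      by_contra h
      simp only [Set.mem_union, Set.mem_setOf_eq, not_or, not_not] at h
      exact hx (by simp [h.1, h.2])⟩

/-- `ρ_a : ↑a → σℕ^κ`, `z ↦ z - a + 𝟏`, as a partial map. -/
noncomputable def rhoP {κ : Type*} (a : SN κ) : SN κ →. SN κ :=
  fun z => ⟨a ≤ z, fun _ => subAddOne z a⟩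

/-- `λ_b : σℕ^κ → ↑b`, `z ↦ z + b - 𝟏`, as a (total) partial map. -/
noncomputable def lamP {κ : Type*} (b : SN κ) : SN κ →. SN κ :=
  fun z => Part.some (addSubOne z b)

/-- `F°_g : σℕ^κ → σℕ^κ`, `a ↦ a ∘ g⁻¹`. -/
noncomputable def FgSN {κ : Type*} (g : Equiv.Perm κ) (a : SN κ) : SN κ :=
  ⟨fun x => a.1 (g.symm x), by
    refine ⟨fun x => a.2.1 _, Set.Finite.subset (a.2.2.image g) fun x hx => ?_⟩
    exact ⟨g.symm x, hx, by simp⟩⟩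

/-- `F°_g` as a (total) partial map on `σℕ^κ`. -/
noncomputable def FgP {κ : Type*} (g : Equiv.Perm κ) : SN κ →. SN κ :=
  fun z => Part.some (FgSN g z)

/-!
An order automorphism `φ` of `σℕ^κ` permutes the atoms `𝟏 + δ_x`; call the permutation `g`.
The elements whose down-set is a chain and which are comparable with `𝟏 + δ_x` are exactly the
`𝟏 + n δ_x`, a copy of `ℕ`; `φ` maps it onto the copy over `g x`, and since `ℕ` is rigid,
`φ (𝟏 + n δ_x) = 𝟏 + n δ_{g x}`. An element `u` is determined by which `𝟏 + n δ_x` lie below it,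
so `φ = F°_g`. Conjugating `α` by the translations `z ↦ z - a + 𝟏` and `z ↦ z + b - 𝟏` yields
such an automorphism, and `F°_g` determines `g`.
-/

theorem PFun.le_fn_of_ran_subset {α β : Type*} [LE β] {f : α →. β} {b : β}
    (hb : f.ran ⊆ {y | b ≤ y}) {x : α} (hx : x ∈ f.Dom) : b ≤ f.fn x hx :=
  hb ⟨x, Part.get_mem hx⟩

theorem PFun.eq_res_iff {α β : Type*} {f : α →. β} {s : Set α} (hf : f.Dom = s) (g : α → β) :
    f = PFun.res g s ↔ ∀ x (hx : x ∈ f.Dom), f.fn x hx = g x := by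
  refine ⟨fun h x hx => by subst h; rfl, fun h => PFun.ext fun x y => ?_⟩
  rw [PFun.mem_res, ← hf]
  constructor
  · intro hy
    have hx : x ∈ f.Dom := Part.dom_iff_mem.mpr ⟨y, hy⟩
    exact ⟨hx, (h x hx).symm.trans (Part.get_eq_of_mem hy hx)⟩
  · rintro ⟨hx, rfl⟩
    exact h x hx ▸ Part.get_mem hx

namespace SN

variable {κ : Type*}

instance : OrderBot (SN κ) where
  bot := ⟨fun _ => 1, fun _ => le_rfl, by simp⟩
  bot_le u := fun x => u.2.1 x

noncomputable def single (x : κ) : ℕ ↪o SN κ :=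
  OrderEmbedding.ofMapLEIff
    (fun n => ⟨fun y => if y = x then n + 1 else 1, fun y => by dsimp only; split <;> omega,
      (Set.finite_singleton x).subset fun y hy => by_contra fun h => hy (if_neg h)⟩)
    fun m n => ⟨fun h => by simpa using h x, fun h y => by dsimp only; split <;> omega⟩

lemma single_apply (x y : κ) (n : ℕ) : (single x n).1 y = if y = x then n + 1 else 1 := rfl

lemma single_zero (x : κ) : single x 0 = ⊥ := by
  ext y
  simp [single_apply, show (⊥ : SN κ).1 y = 1 from rfl]

lemma single_le_iff {x : κ} {n : ℕ} {u : SN κ} : single x n ≤ u ↔ n < u.1 x := by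
  refine ⟨fun h => by simpa [single_apply] using h x, fun h y => ?_⟩
  rw [single_apply]
  split
  · subst_vars; exact h
  · exact u.2.1 y

lemma le_single_iff {x : κ} {n : ℕ} {u : SN κ} :
    u ≤ single x n ↔ u.1 x ≤ n + 1 ∧ ∀ y ≠ x, u.1 y = 1 := by
  refine ⟨fun h => ⟨by simpa [single_apply] using h x, fun y hy => ?_⟩, fun ⟨hx, hy⟩ y => ?_⟩
  · have := h y
    simp only [single_apply, hy, if_false] at this
    exact le_antisymm this (u.2.1 y)
  · rw [single_apply]
    split
    · subst_vars; exact hx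
    · exact (hy y ‹_›).le

lemma single_le_single_iff {x y : κ} {m n : ℕ} (hm : m ≠ 0) :
    single x m ≤ single y n ↔ x = y ∧ m ≤ n := by
  rw [single_le_iff, single_apply]
  split <;> grind

lemma single_left_injective {n : ℕ} (hn : n ≠ 0) : Function.Injective (single (κ := κ) · n) :=
  fun _ _ h => ((single_le_single_iff hn).mp h.le).1

lemma exists_single_one_le {u : SN κ} (hu : u ≠ ⊥) : ∃ x, single x 1 ≤ u := by
  by_contra! h
  refine hu (le_antisymm (fun x => ?_) bot_le)
  have := mt single_le_iff.mpr (h x)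
  show u.1 x ≤ 1
  omega

lemma isAtom_iff_exists_single {u : SN κ} : IsAtom u ↔ ∃ x, u = single x 1 := by
  constructor
  · intro hu
    obtain ⟨x, hx⟩ := exists_single_one_le hu.1
    refine ⟨x, ((hu.le_iff.mp hx).resolve_left fun h => ?_).symm⟩
    rw [← single_zero x] at h
    exact one_ne_zero ((single x).injective h)
  · rintro ⟨x, rfl⟩
    refine isAtom_iff_le_of_ge.mpr ⟨fun h => ?_, fun v hv hle => ?_⟩
    · rw [← single_zero x] at h
      exact one_ne_zero ((single x).injective h)
    · obtain ⟨y, hy⟩ := exists_single_one_le hv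
      rwa [((single_le_single_iff one_ne_zero).mp (hy.trans hle)).1] at hy

lemma isChain_Iic_single (x : κ) (n : ℕ) : IsChain (· ≤ ·) (Set.Iic (single x n)) := by
  refine (single x).monotone.isChain_range.mono fun v (hv : v ≤ single x n) => ?_
  refine Set.mem_range.mpr ⟨v.1 x - 1, ?_⟩
  have hv1 := v.2.1 x
  exact le_antisymm (single_le_iff.mpr (by omega))
    (le_single_iff.mpr ⟨by omega, (le_single_iff.mp hv).2⟩)

lemma exists_eq_single_of_isChain_Iic [Nonempty κ] {u : SN κ}
    (hu : IsChain (· ≤ ·) (Set.Iic u)) : ∃ x n, u = single x n := by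
  rcases eq_or_ne u ⊥ with rfl | hne
  · exact ⟨Classical.arbitrary κ, 0, (single_zero _).symm⟩
  obtain ⟨x, hx⟩ := exists_single_one_le hne
  refine ⟨x, u.1 x - 1, le_antisymm (le_single_iff.mpr ⟨by omega, fun y hy => ?_⟩)
    (single_le_iff.mpr (by have := u.2.1 x; omega))⟩
  by_contra h
  have hyu : single y 1 ≤ u := single_le_iff.mpr (by have := u.2.1 y; omega)
  rcases hu.total hx hyu with h' | h'
  · exact hy ((single_le_single_iff one_ne_zero).mp h').1.symm
  · exact hy ((single_le_single_iff one_ne_zero).mp h').1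

lemma mem_range_single_iff {x : κ} {u : SN κ} :
    u ∈ Set.range (single x) ↔
      IsChain (· ≤ ·) (Set.Iic u) ∧ (u ≤ single x 1 ∨ single x 1 ≤ u) := by
  constructor
  · rintro ⟨n, rfl⟩
    exact ⟨isChain_Iic_single x n,
      (le_total n 1).imp (fun h => (single x).monotone h) fun h => (single x).monotone h⟩
  · rintro ⟨hu, hcomp⟩
    have : Nonempty κ := ⟨x⟩
    obtain ⟨y, n, rfl⟩ := exists_eq_single_of_isChain_Iic hu
    rcases eq_or_ne n 0 with rfl | hn
    · exact ⟨0, by rw [single_zero, single_zero]⟩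
    obtain rfl : y = x := by
      rcases hcomp with h | h
      · exact ((single_le_single_iff hn).mp h).1
      · exact ((single_le_single_iff one_ne_zero).mp h).1.symm
    exact ⟨n, rfl⟩

lemma image_range_single (φ : SN κ ≃o SN κ) {x y : κ} (h : φ (single x 1) = single y 1) :
    φ '' Set.range (single x) = Set.range (single y) := by
  ext v
  rw [φ.image_eq_preimage_symm, Set.mem_preimage, mem_range_single_iff, mem_range_single_iff,
    ← φ.symm.image_Iic, IsChain.image_iso_iff, φ.symm_apply_le, φ.le_symm_apply, h]

lemma map_single (φ : SN κ ≃o SN κ) {x y : κ} (h : φ (single x 1) = single y 1) (n : ℕ) :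
    φ (single x n) = single y n := by
  have hrange : Set.range ((single x).trans φ.toOrderEmbedding) = Set.range (single y) := by
    rw [RelEmbedding.coe_trans, Set.range_comp]
    exact image_range_single φ h
  exact DFunLike.congr_fun (OrderEmbedding.range_inj.mp hrange) n

noncomputable def atomEquiv : κ ≃ {u : SN κ // IsAtom u} :=
  Equiv.ofBijective (fun x => ⟨single x 1, isAtom_iff_exists_single.mpr ⟨x, rfl⟩⟩)
    ⟨fun _ _ h => single_left_injective one_ne_zero (congrArg Subtype.val h),
      fun u => (isAtom_iff_exists_single.mp u.2).imp fun _ hx => Subtype.ext hx.symm⟩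

noncomputable def permOfOrderIso (φ : SN κ ≃o SN κ) : Equiv.Perm κ :=
  (atomEquiv.trans (φ.toEquiv.subtypeEquiv fun u => (φ.isAtom_iff u).symm)).trans atomEquiv.symm

lemma map_single_one (φ : SN κ ≃o SN κ) (x : κ) :
    φ (single x 1) = single (permOfOrderIso φ x) 1 :=
  (congrArg Subtype.val (atomEquiv.apply_symm_apply
    (φ.toEquiv.subtypeEquiv (fun u => (φ.isAtom_iff u).symm) (atomEquiv x)))).symm

lemma FgSN_single (g : Equiv.Perm κ) (x : κ) (n : ℕ) : FgSN g (single x n) = single (g x) n := by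
  ext y
  simp only [FgSN, single_apply, Equiv.symm_apply_eq]

lemma FgSN_injective : Function.Injective (FgSN (κ := κ)) := fun g g' h =>
  Equiv.ext fun x => single_left_injective one_ne_zero <| by
    simpa only [FgSN_single] using congrFun h (single x 1)

lemma eq_FgSN_permOfOrderIso (φ : SN κ ≃o SN κ) : ⇑φ = FgSN (permOfOrderIso φ) := by
  funext u
  ext y
  set g := permOfOrderIso φ
  obtain ⟨x, rfl⟩ := g.surjective y
  show (φ u).1 (g x) = u.1 (g.symm (g x))
  rw [g.symm_apply_apply]
  refine eq_of_forall_lt_iff fun n => ?_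
  rw [← single_le_iff, ← single_le_iff, ← map_single φ (map_single_one φ x), φ.le_iff_le]

theorem existsUnique_eq_FgSN (φ : SN κ ≃o SN κ) : ∃! g : Equiv.Perm κ, ⇑φ = FgSN g :=
  ⟨permOfOrderIso φ, eq_FgSN_permOfOrderIso φ,
    fun _ h => FgSN_injective (h.symm.trans (eq_FgSN_permOfOrderIso φ))⟩

lemma subAddOne_addSubOne (u a : SN κ) : subAddOne (addSubOne u a) a = u := by
  ext x
  have := a.2.1 x
  show u.1 x + a.1 x - 1 - a.1 x + 1 = u.1 x
  have := u.2.1 x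
  omega

lemma addSubOne_subAddOne {z a : SN κ} (h : a ≤ z) : addSubOne (subAddOne z a) a = z := by
  ext x
  have := a.2.1 x
  have : a.1 x ≤ z.1 x := h x
  show z.1 x - a.1 x + 1 + a.1 x - 1 = z.1 x
  omega

lemma le_addSubOne (u a : SN κ) : a ≤ addSubOne u a := fun x => by
  have := u.2.1 x
  show a.1 x ≤ u.1 x + a.1 x - 1
  omega

lemma addSubOne_le_addSubOne_iff {u v a : SN κ} : addSubOne u a ≤ addSubOne v a ↔ u ≤ v :=
  forall_congr' fun x => by
    have := u.2.1 x
    have := v.2.1 x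
    have := a.2.1 x
    show u.1 x + a.1 x - 1 ≤ v.1 x + a.1 x - 1 ↔ u.1 x ≤ v.1 x
    omega

lemma subAddOne_le_subAddOne_iff {z w a : SN κ} (hz : a ≤ z) (hw : a ≤ w) :
    subAddOne z a ≤ subAddOne w a ↔ z ≤ w :=
  forall_congr' fun x => by
    have : a.1 x ≤ z.1 x := hz x
    have : a.1 x ≤ w.1 x := hw x
    show z.1 x - a.1 x + 1 ≤ w.1 x - a.1 x + 1 ↔ z.1 x ≤ w.1 x
    omega

lemma lamP_comp_FgP_comp_rhoP (a b : SN κ) (g : Equiv.Perm κ) :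
    (lamP b).comp ((FgP g).comp (rhoP a)) =
      PFun.res (fun z => addSubOne (FgSN g (subAddOne z a)) b) {z | a ≤ z} := by
  refine PFun.ext fun z w => ?_
  show w ∈ ((⟨a ≤ z, fun _ => subAddOne z a⟩ : Part (SN κ)).bind
    fun u => Part.some (FgSN g u)).bind (fun u => Part.some (addSubOne u b)) ↔ _
  simp only [PFun.mem_res, Part.mem_bind_iff, Part.mem_mk_iff, Part.mem_some_iff, Set.mem_ofPred_eq]
  constructor
  · rintro ⟨_, ⟨_, ⟨hz, rfl⟩, rfl⟩, rfl⟩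
    exact ⟨hz, rfl⟩
  · rintro ⟨hz, rfl⟩
    exact ⟨_, ⟨_, ⟨hz, rfl⟩, rfl⟩, rfl⟩

end SN

namespace IsIPF

variable {κ : Type*} {α : SN κ →. SN κ} {a b : SN κ}

lemma fn_le_fn_iff (hα : IsIPF α) {z w : SN κ} (hz : z ∈ α.Dom) (hw : w ∈ α.Dom) :
    α.fn z hz ≤ α.fn w hw ↔ z ≤ w := by
  obtain ⟨-, -, -, -, h⟩ := hα
  exact (h z w hz hw).symm

/-- `u ↦ α(u + a - 𝟏) - b + 𝟏`: the automorphism of `σℕ^κ` that `α = ρ_a F°_g λ_b` forces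
`F°_g` to be. -/
noncomputable def conj (hα : IsIPF α) (ha : α.Dom = {z | a ≤ z}) (hb : α.ran = {z | b ≤ z}) :
    SN κ ≃o SN κ :=
  OrderIso.ofSurjective
    (OrderEmbedding.ofMapLEIff
      (fun u => subAddOne (α.fn (addSubOne u a) (ha ▸ SN.le_addSubOne u a)) b) fun u v => by
        rw [SN.subAddOne_le_subAddOne_iff (PFun.le_fn_of_ran_subset hb.subset _)
          (PFun.le_fn_of_ran_subset hb.subset _), hα.fn_le_fn_iff, SN.addSubOne_le_addSubOne_iff])
    fun w => by
      obtain ⟨z, hz⟩ : addSubOne w b ∈ α.ran := hb ▸ SN.le_addSubOne w b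
      have hzα : z ∈ α.Dom := Part.dom_iff_mem.mpr ⟨_, hz⟩
      have hza : a ≤ z := by rwa [ha] at hzα
      refine ⟨subAddOne z a, ?_⟩
      simp only [OrderEmbedding.coe_ofMapLEIff, SN.addSubOne_subAddOne hza]
      rw [show α.fn z hzα = addSubOne w b from Part.get_eq_of_mem hz hzα, SN.subAddOne_addSubOne]

lemma conj_apply (hα : IsIPF α) (ha : α.Dom = {z | a ≤ z}) (hb : α.ran = {z | b ≤ z})
    (u : SN κ) :
    hα.conj ha hb u = subAddOne (α.fn (addSubOne u a) (ha ▸ SN.le_addSubOne u a)) b :=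
  rfl

lemma conj_subAddOne (hα : IsIPF α) (ha : α.Dom = {z | a ≤ z}) (hb : α.ran = {z | b ≤ z})
    {z : SN κ} (hz : z ∈ α.Dom) : hα.conj ha hb (subAddOne z a) = subAddOne (α.fn z hz) b := by
  have hza : a ≤ z := by rwa [ha] at hz
  simp only [conj_apply, SN.addSubOne_subAddOne hza]

lemma eq_lamP_comp_iff (hα : IsIPF α) (ha : α.Dom = {z | a ≤ z}) (hb : α.ran = {z | b ≤ z})
    (g : Equiv.Perm κ) :
    α = (lamP b).comp ((FgP g).comp (rhoP a)) ↔ ⇑(hα.conj ha hb) = FgSN g := by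
  rw [SN.lamP_comp_FgP_comp_rhoP, PFun.eq_res_iff ha]
  constructor
  · intro h
    funext u
    rw [conj_apply, h, SN.subAddOne_addSubOne, SN.subAddOne_addSubOne]
  · intro h z hz
    calc α.fn z hz = addSubOne (subAddOne (α.fn z hz) b) b :=
          (SN.addSubOne_subAddOne (PFun.le_fn_of_ran_subset hb.subset hz)).symm
      _ = addSubOne (hα.conj ha hb (subAddOne z a)) b := by rw [conj_subAddOne]
      _ = addSubOne (FgSN g (subAddOne z a)) b := by rw [h]

end IsIPF

theorem stmt16_general {κ : Type*} (α : SN κ →. SN κ) (hα : IsIPF α)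
    (a b : SN κ) (ha : α.Dom = {z | a ≤ z}) (hb : α.ran = {z | b ≤ z}) :
    ∃! g : Equiv.Perm κ, α = (lamP b).comp ((FgP g).comp (rhoP a)) := by
  simpa only [hα.eq_lamP_comp_iff ha hb] using SN.existsUnique_eq_FgSN (hα.conj ha hb)

/-- Every `α ∈ IPF(σℕ^κ)`, with `dom α = ↑a` and `ran α = ↑b`, is uniquely
represented as `ρ_α F°_g λ_α` (left-to-right composition: `ρ` first, then `F°_g`,
then `λ`). -/
theorem stmt16 {κ : Type*} [Infinite κ] (α : SN κ →. SN κ) (hα : IsIPF α)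
    (a b : SN κ) (ha : α.Dom = {z | a ≤ z}) (hb : α.ran = {z | b ≤ z}) :
    ∃! g : Equiv.Perm κ, α = (lamP b).comp ((FgP g).comp (rhoP a)) :=
  stmt16_general α hα a b ha hb
end

section
/- For any infinite cardinal κ, the quotient of IPF(σℕ^κ) by its least group congruence C_mg (where α C_mg β iff αε = βε for some idempotent ε) is isomorphic to the semidirect product S_κ ⋉ σℤ^κ of the group (σℤ^κ, +) by S_κ, where σℤ^κ consists of functions κ → ℤ with finite support, S_κ acts by z ↦ z ∘ g⁻¹, and the product is (g,m)(h,n) = (gh, m∘h⁻¹ + n). -/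
open scoped Classical

/-- The least group congruence on `IPF(σℕ^κ)`: `α C_mg β` iff `α ε = β ε` for some
idempotent `ε` (products left-to-right, so `α ε` is `ε.comp α`). -/
def Cmg {κ : Type*} (α β : SN κ →. SN κ) : Prop :=
  ∃ ε : SN κ →. SN κ, IsIPF ε ∧ ε.comp ε = ε ∧ ε.comp α = ε.comp β

/-- The multiplication of the semidirect product `S_κ ⋉ (σℤ^κ, +)`:
`(g,m)(h,n) = (gh, m ∘ h⁻¹ + n)`, where `g.trans h` applies `g` first and
`σℤ^κ` is the group `κ →₀ ℤ` of finitely supported functions. -/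
noncomputable def sdZ {κ : Type*} (u v : Equiv.Perm κ × (κ →₀ ℤ)) :
    Equiv.Perm κ × (κ →₀ ℤ) :=
  (u.1.trans v.1, Finsupp.equivMapDomain v.1 u.2 + v.2)

/-!
An order isomorphism `↑a ≃o ↑b` between principal filters of `σℕ^κ` becomes, after translating
both filters down to `κ →₀ ℕ`, an order automorphism of `κ →₀ ℕ`. These are exactly the
coordinate permutations: an automorphism preserves the elements whose lower set is a chain (the
`single x n`) and the size `n + 1` of that lower set. Hence every `α ∈ IPF(σℕ^κ)` acts as
`z ↦ z ∘ g⁻¹ + M` for a unique `(g, M) ∈ S_κ × σℤ^κ`; composition of such maps is the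
semidirect-product multiplication, and every pair occurs. An idempotent of `IPF(σℕ^κ)` is the
identity of a principal filter, so `α C_mg β` forces `α` and `β` to agree on a principal filter,
and hence to have the same pair. Conversely, maps with the same pair agree wherever both land
above a common upper bound `c` of their ranges, so they become equal after the identity of `↑c`.
-/

open Finsupp Filter

namespace Finsupp

variable {κ κ' M : Type*}

def domCongrOrderIso [Zero M] [LE M] (g : κ ≃ κ') : (κ →₀ M) ≃o (κ' →₀ M) where
  toEquiv := equivCongrLeft g
  map_rel_iff' {l l'} := by
    simp only [equivCongrLeft_apply, le_def, equivMapDomain_apply]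
    exact (g.forall_congr_left (p := fun i => l i ≤ l' i)).symm

@[simp]
lemma domCongrOrderIso_apply [Zero M] [LE M] (g : κ ≃ κ') (l : κ →₀ M) :
    domCongrOrderIso g l = equivMapDomain g l := rfl

lemma isChain_Iic_iff [Nonempty κ] {l : κ →₀ ℕ} :
    IsChain (· ≤ ·) (Set.Iic l) ↔ ∃ x n, l = single x n := by
  constructor
  · intro h
    rw [← card_support_le_one']
    by_contra! hcard
    obtain ⟨x, hx, y, hy, hxy⟩ := Finset.one_lt_card.mp hcard
    have hlx : single x (l x) ≤ l := single_le_iff.mpr le_rfl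
    have hly : single y (l y) ≤ l := single_le_iff.mpr le_rfl
    rcases h.total hlx hly with h' | h'
    · exact mem_support_iff.mp hx (by simpa [single_le_iff, single_eq_of_ne hxy] using h')
    · exact mem_support_iff.mp hy (by simpa [single_le_iff, single_eq_of_ne (Ne.symm hxy)] using h')
  · rintro ⟨x, n, rfl⟩ u hu v hv -
    have hcol : ∀ u, u ≤ single x n → u = single x (u x) := fun u hu =>
      support_subset_singleton.mp ((support_mono hu).trans support_single_subset)
    rw [hcol u hu, hcol v hv]
    simpa only [single_le_single] using le_total (u x) (v x)

lemma ncard_Iic_single (x : κ) (n : ℕ) : (Set.Iic (single x n)).ncard = n + 1 := by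
  rw [← Finset.coe_Iic, Set.ncard_coe_finset, card_Iic]
  rcases eq_or_ne n 0 with rfl | hn
  · simp
  · simp [support_single, hn]

lemma exists_orderIso_single_eq_single [Nonempty κ] (F : (κ →₀ ℕ) ≃o (κ →₀ ℕ)) (x : κ) (n : ℕ) :
    ∃ y, F (single x n) = single y n := by
  obtain ⟨y, m, hm⟩ := isChain_Iic_iff.mp <| F.image_Iic (single x n) ▸
    (isChain_Iic_iff.mpr ⟨x, n, rfl⟩).image F
  have hcard := Set.ncard_image_of_injective (Set.Iic (single x n)) F.injective
  rw [F.image_Iic, hm, ncard_Iic_single, ncard_Iic_single] at hcard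
  exact ⟨y, by rw [hm, show m = n by omega]⟩

lemma exists_forall_orderIso_single_eq_single [Nonempty κ] (F : (κ →₀ ℕ) ≃o (κ →₀ ℕ)) (x : κ) :
    ∃ y, ∀ n, F (single x n) = single y n := by
  obtain ⟨y, hy⟩ := exists_orderIso_single_eq_single F x 1
  refine ⟨y, fun n => ?_⟩
  obtain ⟨y', hy'⟩ := exists_orderIso_single_eq_single F x n
  rcases eq_or_ne n 0 with rfl | hn
  · rw [hy', single_zero, single_zero]
  have hle : F (single x 1) ≤ F (single x n) := F.monotone (single_le_single.mpr (by omega))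
  rw [hy, hy', single_le_iff, single_apply] at hle
  rw [hy', show y' = y by by_contra h; simp [h] at hle]

theorem exists_orderIso_eq_domCongrOrderIso (F : (κ →₀ ℕ) ≃o (κ →₀ ℕ)) :
    ∃ g : Equiv.Perm κ, F = domCongrOrderIso g := by
  rcases isEmpty_or_nonempty κ with hκ | hκ
  · exact ⟨1, OrderIso.ext <| funext fun _ => ext isEmptyElim⟩
  choose g hg using exists_forall_orderIso_single_eq_single F
  choose g' hg' using exists_forall_orderIso_single_eq_single F.symm
  have hleft (x : κ) : g' (g x) = x := by
    have := F.symm_apply_apply (single x 1)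
    rwa [hg, hg', single_left_inj one_ne_zero] at this
  have hright (y : κ) : g (g' y) = y := by
    have := F.apply_symm_apply (single y 1)
    rwa [hg', hg, single_left_inj one_ne_zero] at this
  refine ⟨⟨g, g', hleft, hright⟩, OrderIso.ext <| funext fun l => ext fun y =>
    eq_of_forall_le_iff fun n => ?_⟩
  calc n ≤ F l y ↔ F.symm (single y n) ≤ l := single_le_iff.symm.trans F.symm_apply_le.symm
    _ ↔ n ≤ domCongrOrderIso ⟨g, g', hleft, hright⟩ l y := by
      rw [hg', single_le_iff, domCongrOrderIso_apply, equivMapDomain_apply]; rfl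

end Finsupp

lemma PFun.mem_comp_iff {α β γ : Type*} {f : β →. γ} {g : α →. β} {a : α} {c : γ} :
    c ∈ f.comp g a ↔ ∃ b ∈ g a, c ∈ f b := by
  rw [PFun.comp_apply]
  exact Part.mem_bind_iff

section SigmaN

variable {κ : Type*}

lemma mem_sigmaN_iff {f : κ → ℕ} : f ∈ sigmaN κ ↔ (∀ x, 1 ≤ f x) ∧ ∀ᶠ x in cofinite, f x = 1 := by
  rw [eventually_cofinite]
  rfl

lemma SN.one_le (z : SN κ) (x : κ) : 1 ≤ z.1 x := z.2.1 x

lemma SN.eventually_eq_one (z : SN κ) : ∀ᶠ x in cofinite, z.1 x = 1 := (mem_sigmaN_iff.mp z.2).2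

instance SN.isDirected : IsDirected (SN κ) (· ≤ ·) where
  directed u v :=
    ⟨⟨fun x => max (u.1 x) (v.1 x), mem_sigmaN_iff.mpr ⟨fun x => le_max_of_le_left (SN.one_le u x),
      ((SN.eventually_eq_one u).and (SN.eventually_eq_one v)).mono fun x h => by simp [h.1, h.2]⟩⟩,
      fun x => le_max_left _ _, fun x => le_max_right _ _⟩

noncomputable def filterOrderIso (a : SN κ) : {z : SN κ // a ≤ z} ≃o (κ →₀ ℕ) where
  toFun z := ofSupportFinite (fun x => z.1.1 x - a.1 x) <| eventually_cofinite.mp <|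
    ((SN.eventually_eq_one z.1).and (SN.eventually_eq_one a)).mono fun x h => by simp [h.1, h.2]
  invFun l := ⟨⟨fun x => a.1 x + l x, mem_sigmaN_iff.mpr ⟨fun x => le_add_right (SN.one_le a x),
    ((SN.eventually_eq_one a).and (eventually_cofinite.mpr l.hasFiniteSupport)).mono
      fun x h => by simp [h.1, h.2]⟩⟩, fun x => le_add_right le_rfl⟩
  left_inv z := Subtype.ext <| Subtype.ext <| funext fun x => Nat.add_sub_cancel' (z.2 x)
  right_inv l := Finsupp.ext fun x => Nat.add_sub_cancel_left _ _
  map_rel_iff' {z w} := forall_congr' fun x => tsub_le_tsub_iff_right (w.2 x)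

lemma filterOrderIso_apply (a : SN κ) (z : {z : SN κ // a ≤ z}) (x : κ) :
    filterOrderIso a z x = z.1.1 x - a.1 x := rfl

lemma filterOrderIso_symm_apply (a : SN κ) (l : κ →₀ ℕ) (x : κ) :
    ((filterOrderIso a).symm l).1.1 x = a.1 x + l x := rfl

def ofOrderIso {a b : SN κ} (e : {z : SN κ // a ≤ z} ≃o {z : SN κ // b ≤ z}) : SN κ →. SN κ :=
  fun z => ⟨a ≤ z, fun h => (e ⟨z, h⟩).1⟩

lemma mem_ofOrderIso {a b : SN κ} {e : {z : SN κ // a ≤ z} ≃o {z : SN κ // b ≤ z}} {z w : SN κ} :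
    w ∈ ofOrderIso e z ↔ ∃ h : a ≤ z, (e ⟨z, h⟩).1 = w := Iff.rfl

lemma ran_ofOrderIso {a b : SN κ} (e : {z : SN κ // a ≤ z} ≃o {z : SN κ // b ≤ z}) :
    (ofOrderIso e).ran = {w | b ≤ w} := by
  refine Set.ext fun w => ⟨?_, fun hw => ?_⟩
  · rintro ⟨z, hz, rfl⟩
    exact (e _).2
  · exact ⟨_, mem_ofOrderIso.mpr ⟨(e.symm ⟨w, hw⟩).2, by simp⟩⟩

theorem isIPF_iff_exists_eq_ofOrderIso {α : SN κ →. SN κ} :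
    IsIPF α ↔ ∃ (a b : SN κ) (e : {z : SN κ // a ≤ z} ≃o {z : SN κ // b ≤ z}),
      α = ofOrderIso e := by
  constructor
  · rintro ⟨a, b, hdom, hran, hle⟩
    have hdom' (z : {z : SN κ // a ≤ z}) : z.1 ∈ α.Dom := hdom ▸ z.2
    have hran' (z : {z : SN κ // a ≤ z}) : b ≤ α.fn z (hdom' z) :=
      show α.fn z (hdom' z) ∈ {w | b ≤ w} from hran ▸ ⟨z, Part.get_mem _⟩
    let f := OrderEmbedding.ofMapLEIff
      (fun z : {z : SN κ // a ≤ z} => (⟨_, hran' z⟩ : {w // b ≤ w})) fun z w => (hle z w _ _).symm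
    have hf : Function.Surjective f := by
      rintro ⟨w, hw⟩
      obtain ⟨z, hz⟩ : w ∈ α.ran := hran ▸ hw
      have hzα : z ∈ {z | a ≤ z} := hdom ▸ Part.dom_iff_mem.mpr ⟨w, hz⟩
      exact ⟨⟨z, hzα⟩, Subtype.ext (Part.get_eq_of_mem hz _)⟩
    exact ⟨a, b, RelIso.ofSurjective f hf, PFun.ext' (fun z => by rw [hdom]; rfl) fun z _ _ => rfl⟩
  · rintro ⟨a, b, e, rfl⟩
    exact ⟨a, b, rfl, ran_ofOrderIso e,
      fun z w hz hw => (e.le_iff_le (x := ⟨z, hz⟩) (y := ⟨w, hw⟩)).symm⟩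

end SigmaN

section AffineRep

variable {κ : Type*}

def affineAct (p : Equiv.Perm κ × (κ →₀ ℤ)) (z : SN κ) (y : κ) : ℤ := z.1 (p.1.symm y) + p.2 y

def AffineRep (α : SN κ →. SN κ) (p : Equiv.Perm κ × (κ →₀ ℤ)) : Prop :=
  ∀ z w, w ∈ α z → ∀ y, (w.1 y : ℤ) = affineAct p z y

lemma affineAct_injective (p : Equiv.Perm κ × (κ →₀ ℤ)) : Function.Injective (affineAct p) :=
  fun z z' h => Subtype.ext <| funext fun x => by
    have := congrFun h (p.1 x)
    simp only [affineAct, Equiv.symm_apply_apply, add_left_inj, Nat.cast_inj] at this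
    exact this

lemma eq_of_forall_ge_affineAct_eq {p q : Equiv.Perm κ × (κ →₀ ℤ)} {z₀ : SN κ}
    (H : ∀ z, z₀ ≤ z → affineAct p z = affineAct q z) : p = q := by
  have H₀ := congrFun (H z₀ le_rfl)
  -- raising `z₀` by one at `p.1⁻¹ y` moves `affineAct p · y`, but not `affineAct q · y` unless
  -- `q.1⁻¹ y = p.1⁻¹ y`
  have hsymm (y : κ) : p.1.symm y = q.1.symm y := by
    by_contra hne
    let z := (filterOrderIso z₀).symm (single (p.1.symm y) 1)
    have := congrFun (H z.1 z.2) y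
    have h₀ := H₀ y
    simp only [affineAct, z, filterOrderIso_symm_apply, single_apply, hne, if_true, if_false]
      at this h₀
    omega
  have hM (y : κ) : p.2 y = q.2 y := by
    have := H₀ y
    simp only [affineAct, hsymm] at this
    omega
  exact Prod.ext (Equiv.symm_bijective.injective (Equiv.ext hsymm)) (Finsupp.ext hM)

lemma AffineRep.eq {α β : SN κ →. SN κ} {p q : Equiv.Perm κ × (κ →₀ ℤ)}
    (hp : AffineRep α p) (hq : AffineRep β q)
    (h : ∃ z₀, ∀ z, z₀ ≤ z → ∃ w, w ∈ α z ∧ w ∈ β z) : p = q := by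
  obtain ⟨z₀, h⟩ := h
  refine eq_of_forall_ge_affineAct_eq (z₀ := z₀) fun z hz => funext fun y => ?_
  obtain ⟨w, hwα, hwβ⟩ := h z hz
  rw [← hp z w hwα, ← hq z w hwβ]

lemma AffineRep.mem_of_mem_ran {α β : SN κ →. SN κ} {p : Equiv.Perm κ × (κ →₀ ℤ)}
    (hα : AffineRep α p) (hβ : AffineRep β p) {z w : SN κ} (hw : w ∈ α z) (hran : w ∈ β.ran) :
    w ∈ β z := by
  obtain ⟨z', hz'⟩ := hran
  obtain rfl : z' = z :=
    affineAct_injective p <| funext fun y => by rw [← hβ _ _ hz', ← hα _ _ hw]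
  exact hz'

lemma AffineRep.comp {α β : SN κ →. SN κ} {p q : Equiv.Perm κ × (κ →₀ ℤ)}
    (hp : AffineRep α p) (hq : AffineRep β q) : AffineRep (β.comp α) (sdZ p q) := by
  intro z w hw y
  obtain ⟨u, hu, hw⟩ := PFun.mem_comp_iff.mp hw
  rw [hq u w hw, affineAct, hp z u hu]
  simp only [affineAct, sdZ, Equiv.symm_trans_apply, Finsupp.add_apply, equivMapDomain_apply]
  ring

noncomputable def shift (g : Equiv.Perm κ) (a b : SN κ) : κ →₀ ℤ :=
  ofSupportFinite (fun y => (b.1 y : ℤ) - a.1 (g.symm y)) <| eventually_cofinite.mp <|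
    ((SN.eventually_eq_one b).and (g.symm.injective.tendsto_cofinite.eventually
      (SN.eventually_eq_one a))).mono fun y h => by simp [h.1, h.2]

lemma shift_apply (g : Equiv.Perm κ) (a b : SN κ) (y : κ) :
    shift g a b y = (b.1 y : ℤ) - a.1 (g.symm y) := rfl

lemma affineRep_ofOrderIso {a b : SN κ} (e : {z : SN κ // a ≤ z} ≃o {z : SN κ // b ≤ z})
    (g : Equiv.Perm κ)
    (he : ∀ z, filterOrderIso b (e z) = equivMapDomain g (filterOrderIso a z)) :
    AffineRep (ofOrderIso e) (g, shift g a b) := by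
  rintro z _ ⟨hz, rfl⟩ y
  change ((e ⟨z, hz⟩).1.1 y : ℤ) = _
  have := congrArg (· y) (he ⟨z, hz⟩)
  simp only [filterOrderIso_apply, equivMapDomain_apply] at this
  have hb : b.1 y ≤ (e ⟨z, hz⟩).1.1 y := (e ⟨z, hz⟩).2 y
  have ha : a.1 (g.symm y) ≤ z.1 (g.symm y) := hz (g.symm y)
  simp only [affineAct, shift_apply]
  omega

theorem exists_affineRep {α : SN κ →. SN κ} (hα : IsIPF α) : ∃ p, AffineRep α p := by
  obtain ⟨a, b, e, rfl⟩ := isIPF_iff_exists_eq_ofOrderIso.mp hα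
  obtain ⟨g, hg⟩ := exists_orderIso_eq_domCongrOrderIso
    (((filterOrderIso a).symm.trans e).trans (filterOrderIso b))
  refine ⟨_, affineRep_ofOrderIso e g fun z => ?_⟩
  simpa using DFunLike.congr_fun hg (filterOrderIso a z)

lemma exists_shift_eq (g : Equiv.Perm κ) (M : κ →₀ ℤ) : ∃ a b : SN κ, shift g a b = M := by
  have hM : ∀ᶠ y in cofinite, M y = 0 := eventually_cofinite.mpr M.hasFiniteSupport
  refine ⟨⟨fun x => 1 + (-M (g x)).toNat, mem_sigmaN_iff.mpr ⟨fun x => le_add_right le_rfl,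
      (g.injective.tendsto_cofinite.eventually hM).mono fun x h => by simp [h]⟩⟩,
    ⟨fun y => 1 + (M y).toNat, mem_sigmaN_iff.mpr ⟨fun y => le_add_right le_rfl,
      hM.mono fun y h => by simp [h]⟩⟩, Finsupp.ext fun y => ?_⟩
  simp only [shift_apply, Equiv.apply_symm_apply]
  omega

theorem exists_isIPF_affineRep (p : Equiv.Perm κ × (κ →₀ ℤ)) : ∃ α, IsIPF α ∧ AffineRep α p := by
  obtain ⟨g, M⟩ := p
  obtain ⟨a, b, rfl⟩ := exists_shift_eq g M
  let e := ((filterOrderIso a).trans (domCongrOrderIso g)).trans (filterOrderIso b).symm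
  exact ⟨ofOrderIso e, isIPF_iff_exists_eq_ofOrderIso.mpr ⟨a, b, e, rfl⟩,
    affineRep_ofOrderIso e g fun z => by simp [e]⟩

lemma IsIPF.affineRep_unique {α : SN κ →. SN κ} (hα : IsIPF α) {p q : Equiv.Perm κ × (κ →₀ ℤ)}
    (hp : AffineRep α p) (hq : AffineRep α q) : p = q := by
  obtain ⟨a, b, e, rfl⟩ := isIPF_iff_exists_eq_ofOrderIso.mp hα
  exact hp.eq hq ⟨a, fun z hz => ⟨_, ⟨hz, rfl⟩, ⟨hz, rfl⟩⟩⟩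

end AffineRep

section Cmg

variable {κ : Type*}

lemma IsIPF.eq_of_mem_of_comp_self {ε : SN κ →. SN κ} (hε : IsIPF ε) (hidem : ε.comp ε = ε)
    {u w : SN κ} (hw : w ∈ ε u) : w = u := by
  obtain ⟨c, d, e, rfl⟩ := isIPF_iff_exists_eq_ofOrderIso.mp hε
  obtain ⟨v, hv, hwv⟩ := PFun.mem_comp_iff.mp (hidem.symm ▸ hw)
  obtain rfl := Part.mem_unique hv hw
  obtain ⟨hu, rfl⟩ := hw
  obtain ⟨_, hww⟩ := hwv
  exact congrArg Subtype.val (e.injective (Subtype.ext hww))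

lemma Cmg.exists_forall_ge_mem {α β : SN κ →. SN κ} (hα : IsIPF α) (h : Cmg α β) :
    ∃ z₀, ∀ z, z₀ ≤ z → ∃ w, w ∈ α z ∧ w ∈ β z := by
  obtain ⟨ε, hε, hidem, hcomp⟩ := h
  obtain ⟨c, d, eε, rfl⟩ := isIPF_iff_exists_eq_ofOrderIso.mp hε
  obtain ⟨a, b, e, rfl⟩ := isIPF_iff_exists_eq_ofOrderIso.mp hα
  obtain ⟨w₀, hbw₀, hcw₀⟩ := exists_ge_ge b c
  refine ⟨(e.symm ⟨w₀, hbw₀⟩).1, fun z hz => ?_⟩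
  have haz : a ≤ z := (e.symm _).2.trans hz
  have hcw : c ≤ (e ⟨z, haz⟩).1 :=
    hcw₀.trans <| Subtype.coe_le_coe.mpr <| e.symm_apply_le.mp (show e.symm _ ≤ ⟨z, haz⟩ from hz)
  have hwε : (e ⟨z, haz⟩).1 ∈ ofOrderIso eε (e ⟨z, haz⟩).1 := mem_ofOrderIso.mpr
    ⟨hcw, hε.eq_of_mem_of_comp_self hidem (mem_ofOrderIso.mpr ⟨hcw, rfl⟩)⟩
  obtain ⟨v, hv, hwv⟩ := PFun.mem_comp_iff.mp <| hcomp ▸ PFun.mem_comp_iff.mpr ⟨_, ⟨haz, rfl⟩, hwε⟩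
  obtain rfl := hε.eq_of_mem_of_comp_self hidem hwv
  exact ⟨_, ⟨haz, rfl⟩, hv⟩

theorem AffineRep.eq_of_cmg {α β : SN κ →. SN κ} (hα : IsIPF α) (h : Cmg α β)
    {p q : Equiv.Perm κ × (κ →₀ ℤ)} (hp : AffineRep α p) (hq : AffineRep β q) : p = q :=
  hp.eq hq (h.exists_forall_ge_mem hα)

theorem cmg_of_affineRep {α β : SN κ →. SN κ} (hα : IsIPF α) (hβ : IsIPF β)
    {p : Equiv.Perm κ × (κ →₀ ℤ)} (hpα : AffineRep α p) (hpβ : AffineRep β p) : Cmg α β := by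
  obtain ⟨a, b, e, rfl⟩ := isIPF_iff_exists_eq_ofOrderIso.mp hα
  obtain ⟨a', b', e', rfl⟩ := isIPF_iff_exists_eq_ofOrderIso.mp hβ
  obtain ⟨c, hbc, hb'c⟩ := exists_ge_ge b b'
  let ε := ofOrderIso (OrderIso.refl {z : SN κ // c ≤ z})
  have mem_ε (u w : SN κ) : w ∈ ε u ↔ c ≤ u ∧ u = w :=
    ⟨fun ⟨h, hw⟩ => ⟨h, hw⟩, fun ⟨h, hw⟩ => ⟨h, hw⟩⟩
  refine ⟨ε, isIPF_iff_exists_eq_ofOrderIso.mpr ⟨c, c, _, rfl⟩, PFun.ext fun z w => ?_,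
    PFun.ext fun z w => ?_⟩
  · simp only [PFun.mem_comp_iff, mem_ε]
    constructor
    · rintro ⟨u, ⟨hu, rfl⟩, -, rfl⟩
      exact ⟨hu, rfl⟩
    · rintro ⟨hz, rfl⟩
      exact ⟨z, ⟨hz, rfl⟩, hz, rfl⟩
  · simp only [PFun.mem_comp_iff, mem_ε, exists_eq_right_right]
    exact and_congr_left fun hcw =>
      ⟨fun hw => hpα.mem_of_mem_ran hpβ hw (by rw [ran_ofOrderIso]; exact hb'c.trans hcw),
        fun hw => hpβ.mem_of_mem_ran hpα hw (by rw [ran_ofOrderIso]; exact hbc.trans hcw)⟩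

end Cmg

theorem stmt19_general {κ : Type*} :
    ∃ Ψ : {α : SN κ →. SN κ // IsIPF α} → Equiv.Perm κ × (κ →₀ ℤ),
      Function.Surjective Ψ ∧
      (∀ α β : {α : SN κ →. SN κ // IsIPF α}, Ψ α = Ψ β ↔ Cmg α.1 β.1) ∧
      ∀ (α β : {α : SN κ →. SN κ // IsIPF α}) (h : IsIPF (β.1.comp α.1)),
        Ψ ⟨β.1.comp α.1, h⟩ = sdZ (Ψ α) (Ψ β) := by
  choose Ψ hΨ using fun α : {α : SN κ →. SN κ // IsIPF α} => exists_affineRep α.2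
  refine ⟨Ψ, fun p => ?_, fun α β => ⟨fun h => ?_, fun h => ?_⟩, fun α β h => ?_⟩
  · obtain ⟨α, hα, hp⟩ := exists_isIPF_affineRep p
    exact ⟨⟨α, hα⟩, hα.affineRep_unique (hΨ ⟨α, hα⟩) hp⟩
  · exact cmg_of_affineRep α.2 β.2 (hΨ α) (h ▸ hΨ β)
  · exact (hΨ α).eq_of_cmg α.2 h (hΨ β)
  · exact h.affineRep_unique (hΨ ⟨_, h⟩) ((hΨ α).comp (hΨ β))

/-- The quotient of `IPF(σℕ^κ)` by its least group congruence `C_mg` is isomorphic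
to `S_κ ⋉ (σℤ^κ, +)`: there is a surjection `Ψ` from `IPF(σℕ^κ)` onto
`S_κ × σℤ^κ` whose fibers are exactly the `C_mg`-classes and which transforms
(left-to-right) composition into the semidirect-product multiplication. -/
theorem stmt19 {κ : Type*} [Infinite κ] :
    ∃ Ψ : {α : SN κ →. SN κ // IsIPF α} → Equiv.Perm κ × (κ →₀ ℤ),
      Function.Surjective Ψ ∧
      (∀ α β : {α : SN κ →. SN κ // IsIPF α}, Ψ α = Ψ β ↔ Cmg α.1 β.1) ∧
      ∀ (α β : {α : SN κ →. SN κ // IsIPF α}) (h : IsIPF (β.1.comp α.1)),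
        Ψ ⟨β.1.comp α.1, h⟩ = sdZ (Ψ α) (Ψ β) :=
  stmt19_general
end
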